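/- arXiv:2307.09100 — 7 statements merged into one kernel-verified Lean document; each statement's English description precedes it below -/
import Mathlib

section
/- Let A and B be directed preorders such that the quotients A/≡ and B/≡ by the equivalence (a ≡ b iff a ≤ b and b ≤ a) are countable, and assume A is not bounded (A has no upper bound for the whole set). If there exists a Tukey map A → B, then there exists a monotone Tukey map A → B. -/
/-- A subset of a preorder is bounded (from above). -/
def SBounded {α : Type*} [Preorder α] (S : Set α) : Prop := ∃ b, ∀ x ∈ S, x ≤ b

/-- A Tukey (unbounded) map: images of unbounded sets are unbounded. -/
def IsTukeyMap {α β : Type*} [Preorder α] [Preorder β] (f : α → β) : Prop :=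
  ∀ S : Set α, ¬ SBounded S → ¬ SBounded (f '' S)

/-- If `A` and `B` are essentially countable directed preorders, `A` is unbounded and
there is a Tukey map `A → B`, then there is a monotone Tukey map `A → B`. -/
theorem exists_monotone_tukey {α β : Type*} [Preorder α] [Preorder β]
    (hA : IsDirected α (· ≤ ·)) (hB : IsDirected β (· ≤ ·))
    (hcA : Countable (Antisymmetrization α (· ≤ ·)))
    (hcB : Countable (Antisymmetrization β (· ≤ ·)))
    (hub : ¬ SBounded (Set.univ : Set α))
    (h : ∃ f : α → β, IsTukeyMap f) :
    ∃ f : α → β, Monotone f ∧ IsTukeyMap f := by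
  classical
  obtain ⟨f, hf⟩ := h
  by_cases hne : Nonempty α
  swap
  · exact ⟨f, fun x _ _ => absurd ⟨x⟩ hne, hf⟩
  have hneA' : Nonempty (Antisymmetrization α (· ≤ ·)) :=
    Nonempty.map (toAntisymmetrization (· ≤ ·)) hne
  obtain ⟨e, he⟩ := exists_surjective_nat (Antisymmetrization α (· ≤ ·))
  set c : ℕ → α := fun n => ofAntisymmetrization (· ≤ ·) (e n) with hc
  -- upper bound functions from directedness
  have hdA : ∀ x y : α, ∃ z, x ≤ z ∧ y ≤ z := fun x y => directed_of (· ≤ ·) x y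
  choose ubA hubA1 hubA2 using hdA
  have hdB : ∀ x y : β, ∃ z, x ≤ z ∧ y ≤ z := fun x y => directed_of (· ≤ ·) x y
  choose ubB hubB1 hubB2 using hdB
  -- increasing cofinal sequence in α
  set a : ℕ → α := fun n => Nat.rec (c 0) (fun n an => ubA an (c (n + 1))) n with ha
  have hamono : Monotone a := by
    apply monotone_nat_of_le_succ
    intro n
    exact hubA1 _ _
  have hca : ∀ n, c n ≤ a n := by
    intro n
    cases n with
    | zero => exact le_refl _
    | succ n => exact hubA2 _ _
  have hcov : ∀ x : α, ∃ n, x ≤ a n := by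
    intro x
    obtain ⟨n, hn⟩ := he (toAntisymmetrization (· ≤ ·) x)
    refine ⟨n, le_trans ?_ (hca n)⟩
    have : toAntisymmetrization ((· ≤ ·) : α → α → Prop) x ≤
        toAntisymmetrization ((· ≤ ·) : α → α → Prop) (c n) := by
      simp [hc, hn]
    rwa [toAntisymmetrization_le_toAntisymmetrization_iff] at this
  -- increasing sequence in β dominating f ∘ a
  set b : ℕ → β := fun n => Nat.rec (f (a 0)) (fun n bn => ubB bn (f (a (n + 1)))) n with hb
  have hbmono : Monotone b := by
    apply monotone_nat_of_le_succ
    intro n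
    exact hubB1 _ _
  have hfb : ∀ n, f (a n) ≤ b n := by
    intro n
    cases n with
    | zero => exact le_refl _
    | succ n => exact hubB2 _ _
  -- the monotone map
  refine ⟨fun x => b (Nat.find (hcov x)), ?_, ?_⟩
  · intro x y hxy
    apply hbmono
    exact Nat.find_min' (hcov x) (le_trans hxy (Nat.find_spec (hcov y)))
  · intro S hS ⟨β0, hβ0⟩
    -- indices are unbounded over S
    have hNun : ∀ N : ℕ, ∃ x ∈ S, N ≤ Nat.find (hcov x) := by
      intro N
      by_contra hcon
      push_neg at hcon
      apply hS
      refine ⟨a N, fun x hx => ?_⟩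
      exact le_trans (Nat.find_spec (hcov x)) (hamono (le_of_lt (hcon x hx)))
    -- the set of a-values over S is unbounded
    set T : Set α := (fun x => a (Nat.find (hcov x))) '' S with hT
    have hTun : ¬ SBounded T := by
      rintro ⟨t, ht⟩
      apply hub
      refine ⟨t, fun y _ => ?_⟩
      obtain ⟨N, hN⟩ := hcov y
      obtain ⟨x, hxS, hxN⟩ := hNun N
      exact le_trans hN (le_trans (hamono hxN) (ht _ ⟨x, hxS, rfl⟩))
    apply hf T hTun
    refine ⟨β0, ?_⟩
    rintro _ ⟨_, ⟨x, hxS, rfl⟩, rfl⟩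
    exact le_trans (hfb _) (le_trans (le_refl _) (hβ0 _ ⟨x, hxS, rfl⟩))
end

section
/- Let B and C be small categories and let (F, H, Φ) be a pre-adjunction from B to C. Then, considering Ob(B) and Ob(C) as preorders under the relation 'there exists a morphism from X to Y', the object map F : Ob(B) → Ob(C) is a Tukey map and H : Ob(C) → Ob(B) is a cofinal map. -/
open CategoryTheory

/-- A pre-adjunction from `B` to `C` (Mašulović). -/
structure PreAdjunction (B : Type*) (C : Type*) [Category B] [Category C] where
  F : B → C
  H : C → B
  Φ : ∀ (X : B) (Y : C), (F X ⟶ Y) → (X ⟶ H Y)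
  pa : ∀ (A X : B) (Y : C) (u : F X ⟶ Y) (f : A ⟶ X),
    ∃ v : F A ⟶ F X, f ≫ Φ X Y u = Φ A Y (v ≫ u)

/-- A subset is bounded with respect to a relation. -/
def RBounded {α : Type*} (r : α → α → Prop) (S : Set α) : Prop := ∃ b, ∀ x ∈ S, r x b

/-- A subset is cofinal with respect to a relation. -/
def RCofinal {α : Type*} (r : α → α → Prop) (S : Set α) : Prop := ∀ a, ∃ x ∈ S, r a x

/-- A Tukey map with respect to relations: unbounded sets go to unbounded sets. -/
def RTukey {α β : Type*} (rA : α → α → Prop) (rB : β → β → Prop) (f : α → β) : Prop :=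
  ∀ S : Set α, ¬ RBounded rA S → ¬ RBounded rB (f '' S)

/-- A cofinal map with respect to relations: cofinal sets go to cofinal sets. -/
def RCofinalMap {α β : Type*} (rA : α → α → Prop) (rB : β → β → Prop) (f : α → β) : Prop :=
  ∀ S : Set α, RCofinal rA S → RCofinal rB (f '' S)

/-- The preorder on objects of a category: `X ≤ Y` iff there is a morphism `X ⟶ Y`. -/
def arrowRel (C : Type*) [Category C] : C → C → Prop := fun X Y => Nonempty (X ⟶ Y)

/-- If `(F, H, Φ)` is a pre-adjunction from `B` to `C`, then `F` is a Tukey map and `H`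
is a cofinal map with respect to the preorders on objects given by existence of morphisms. -/
theorem preAdjunction_tukey_cofinal {B C : Type*} [SmallCategory B] [SmallCategory C]
    (P : PreAdjunction B C) :
    RTukey (arrowRel B) (arrowRel C) P.F ∧ RCofinalMap (arrowRel C) (arrowRel B) P.H := by
  constructor
  · intro S hS hb
    apply hS
    obtain ⟨b, hb⟩ := hb
    exact ⟨P.H b, fun x hx => ⟨P.Φ x b (hb _ ⟨x, hx, rfl⟩).some⟩⟩
  · intro S hS a
    obtain ⟨x, hx, ⟨u⟩⟩ := hS (P.F a)
    exact ⟨P.H x, ⟨x, hx, rfl⟩, ⟨P.Φ a x u⟩⟩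
end

section
/- Let B and C be locally small categories and H : C → B a functor that is full and isomorphism-dense (every object of B is isomorphic to H(X) for some object X of C). Then there exists a map F : Ob(B) → Ob(C) such that (F, H) extends to a pre-adjunction from B to C. -/
open CategoryTheory

/-- If `H : C ⥤ B` is a full and isomorphism-dense functor, then there is a map
`F : Ob(B) → Ob(C)` such that `(F, H)` extends to a pre-adjunction from `B` to `C`. -/
theorem full_essSurj_preAdjunction {B C : Type*} [Category B] [Category C]
    (H : C ⥤ B) [H.Full] [H.EssSurj] :
    ∃ P : PreAdjunction B C, P.H = H.obj := by
  refine ⟨{ F := fun X => H.objPreimage X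
            H := H.obj
            Φ := fun X Y u => (H.objObjPreimageIso X).inv ≫ H.map u
            pa := ?_ }, rfl⟩
  intro A X Y u f
  refine ⟨H.preimage ((H.objObjPreimageIso A).hom ≫ f ≫ (H.objObjPreimageIso X).inv), ?_⟩
  simp
end

section
/- Let C be a Ramsey category of finite objects. If A ≅ B for objects A, B of C, then every morphism A → B is an isomorphism, i.e., hom_C(A, B) = iso_C(A, B). In particular hom_C(A, A) = {id_A}, so every object of C is rigid. -/
open CategoryTheory

/-- A Ramsey category of finite objects: a locally small directed category with all
morphisms mono, having the Ramsey property, whose skeleton (given by a chosen set of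
objects meeting every isomorphism class exactly once) is countable and in which every
skeletal object is the codomain of only finitely many morphisms between skeletal
objects. -/
structure RamseyCatFinObj (C : Type*) [Category C] where
  directed : ∀ A B : C, ∃ X : C, Nonempty (A ⟶ X) ∧ Nonempty (B ⟶ X)
  mono : ∀ {A B : C} (f : A ⟶ B), Mono f
  ramsey : ∀ (k : ℕ) (A B : C), Nonempty (A ⟶ B) →
    ∃ X : C, Nonempty (B ⟶ X) ∧
      ∀ χ : (A ⟶ X) → Fin k, ∃ w : B ⟶ X, ∀ f g : A ⟶ B, χ (f ≫ w) = χ (g ≫ w)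
  skel : Set C
  skel_unique : ∀ X : C, ∃! Y : C, Y ∈ skel ∧ Nonempty (X ≅ Y)
  skel_countable : Countable skel
  skel_finCod : ∀ Y ∈ skel, Finite (Σ X : skel, ((X : C) ⟶ Y))

/-- The endomorphism set of any object in a Ramsey category of finite objects is finite. -/
lemma RamseyCatFinObj.end_finite {C : Type*} [Category C] (h : RamseyCatFinObj C) (A : C) :
    Finite (A ⟶ A) := by
  obtain ⟨Y, ⟨hY, ⟨e⟩⟩, -⟩ := h.skel_unique A
  haveI := h.skel_finCod Y hY
  have hinj : Function.Injective (fun f : Y ⟶ Y => (⟨⟨Y, hY⟩, f⟩ : Σ X : h.skel, ((X : C) ⟶ Y))) := by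
    intro f g hfg
    exact eq_of_heq (Sigma.mk.inj_iff.mp hfg).2
  haveI : Finite (Y ⟶ Y) := Finite.of_injective _ hinj
  exact Finite.of_equiv _ (e.homCongr e).symm

/-- Every endomorphism in a Ramsey category of finite objects is an isomorphism. -/
lemma RamseyCatFinObj.endo_isIso {C : Type*} [Category C] (h : RamseyCatFinObj C)
    {A : C} (f : A ⟶ A) : IsIso f := by
  haveI : Finite (A ⟶ A) := h.end_finite A
  have key : ∀ g : A ⟶ A, ∃ u : A ⟶ A, u ≫ g = 𝟙 A := by
    intro g
    haveI := h.mono g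
    have hinj : Function.Injective (fun u : A ⟶ A => u ≫ g) := by
      intro u v huv
      exact (cancel_mono g).mp huv
    exact (Finite.injective_iff_surjective.mp hinj) (𝟙 A)
  obtain ⟨g, hg⟩ := key f
  obtain ⟨k, hk⟩ := key g
  have hf : f = k := by
    calc f = (k ≫ g) ≫ f := by rw [hk]; simp
    _ = k ≫ (g ≫ f) := by simp
    _ = k := by rw [hg]; simp
  exact ⟨g, by rw [hf]; exact hk, hg⟩

/-- In a Ramsey category of finite objects, if `A ≅ B` then every morphism `A ⟶ B` is an
isomorphism; in particular `hom(A, A) = {id A}`, so every object is rigid. -/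
theorem hom_eq_iso_of_iso {C : Type*} [Category C] (h : RamseyCatFinObj C) :
    (∀ (A B : C), Nonempty (A ≅ B) → ∀ f : A ⟶ B, IsIso f) ∧
    (∀ (A : C) (f : A ⟶ A), f = 𝟙 A) := by
  classical
  constructor
  · intro A B ⟨e⟩ f
    haveI : IsIso (f ≫ e.inv) := h.endo_isIso _
    have : f = (f ≫ e.inv) ≫ e.hom := by simp
    rw [this]
    infer_instance
  · intro A f
    by_contra hf
    obtain ⟨X, ⟨w0⟩, hX⟩ := h.ramsey 2 A A ⟨𝟙 A⟩
    -- equivalence relation: same orbit under precomposition by endomorphisms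
    let s : Setoid (A ⟶ X) :=
      { r := fun u v => ∃ g : A ⟶ A, u = g ≫ v
        iseqv := by
          refine ⟨fun u => ⟨𝟙 A, by simp⟩, ?_, ?_⟩
          · rintro u v ⟨g, rfl⟩
            haveI := h.endo_isIso g
            exact ⟨inv g, by simp⟩
          · rintro u v w ⟨g, rfl⟩ ⟨g', rfl⟩
            exact ⟨g ≫ g', by simp⟩ }
    let χ : (A ⟶ X) → Fin 2 := fun u => if u = (Quotient.mk s u).out then 0 else 1
    obtain ⟨w, hw⟩ := hX χ
    set r := (Quotient.mk s w).out with hrdef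
    have hrw : Quotient.mk s r = Quotient.mk s w := Quotient.out_eq _
    obtain ⟨g, hg⟩ : ∃ g : A ⟶ A, r = g ≫ w := Quotient.exact hrw
    have hfr_ne : f ≫ r ≠ r := by
      intro hcon
      haveI := h.mono r
      apply hf
      have : f ≫ r = 𝟙 A ≫ r := by simpa using hcon
      exact (cancel_mono r).mp this
    have hfr_rel : Quotient.mk s (f ≫ r) = Quotient.mk s r := Quotient.sound ⟨f, rfl⟩
    have hχr : χ r = 0 := by
      have : (Quotient.mk s r).out = r := by rw [hrw]
      simp [χ, this]
    have hχfr : χ (f ≫ r) = 1 := by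
      have h1 : (Quotient.mk s (f ≫ r)).out = r := by rw [hfr_rel, hrw]
      simp only [χ, h1, if_neg hfr_ne]
    have heq : χ (g ≫ w) = χ ((f ≫ g) ≫ w) := hw g (f ≫ g)
    rw [← hg] at heq
    have : (f ≫ g) ≫ w = f ≫ r := by rw [hg]; simp
    rw [this, hχr, hχfr] at heq
    exact absurd heq (by decide)
end

section
/- Let C be a Ramsey category of finite objects that is not thin (some hom-set has at least two morphisms). Then there exists a sequence of objects C_0, C_1, C_2, ... of C such that for every i there is a morphism C_i → C_{i+1} but no morphism C_{i+1} → C_i. In particular no object B of C satisfies A → B for all objects A. -/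
open CategoryTheory

/-- All hom-sets in a Ramsey category of finite objects are finite. -/
lemma RamseyCatFinObj.homFinite {C : Type*} [Category C] (h : RamseyCatFinObj C)
    (A D : C) : Finite (A ⟶ D) := by
  obtain ⟨Y, ⟨hY, ⟨e⟩⟩, -⟩ := h.skel_unique D
  obtain ⟨A', ⟨hA', ⟨a⟩⟩, -⟩ := h.skel_unique A
  have hfin : Finite (Σ X : h.skel, ((X : C) ⟶ Y)) := h.skel_finCod Y hY
  have h1 : Finite ((A' : C) ⟶ Y) :=
    Finite.of_injective (fun f => (⟨⟨A', hA'⟩, f⟩ : Σ X : h.skel, ((X : C) ⟶ Y)))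
      (fun f g hfg => by injection hfg)
  exact Finite.of_equiv _ (a.homCongr e).symm

/-- Key step: from any object there is a strictly "larger" object. -/
lemma RamseyCatFinObj.exists_step {C : Type*} [Category C] (h : RamseyCatFinObj C)
    {A B : C} {f g : A ⟶ B} (hfg : f ≠ g) (D : C) :
    ∃ E : C, Nonempty (D ⟶ E) ∧ ¬ Nonempty (E ⟶ D) := by
  have : Finite (A ⟶ D) := h.homFinite A D
  obtain ⟨n, ⟨ι⟩⟩ := Finite.exists_equiv_fin (A ⟶ D)
  obtain ⟨X, hBX, hX⟩ := h.ramsey n A B ⟨f⟩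
  obtain ⟨E, ⟨xe⟩, hDE⟩ := h.directed X D
  refine ⟨E, hDE, ?_⟩
  rintro ⟨p⟩
  obtain ⟨w, hw⟩ := hX (fun q => ι (q ≫ (xe ≫ p)))
  have hm : Mono (w ≫ xe ≫ p) := h.mono _
  apply hfg
  have h2 : (f ≫ w) ≫ xe ≫ p = (g ≫ w) ≫ xe ≫ p := ι.injective (hw f g)
  simpa only [Category.assoc] using hm.right_cancellation f g (by
    simpa only [Category.assoc] using h2)

/-- In a non-thin Ramsey category of finite objects there is a sequence of objects
`C_0, C_1, C_2, …` with `C_i → C_{i+1}` but `C_{i+1} ↛ C_i`; in particular no object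
receives a morphism from every object. -/
theorem nonthin_increasing_sequence {C : Type*} [Category C] (h : RamseyCatFinObj C)
    (hnt : ∃ (A B : C) (f g : A ⟶ B), f ≠ g) :
    (∃ c : ℕ → C, ∀ i : ℕ,
      Nonempty (c i ⟶ c (i + 1)) ∧ ¬ Nonempty (c (i + 1) ⟶ c i)) ∧
    ¬ ∃ B : C, ∀ A : C, Nonempty (A ⟶ B) := by
  obtain ⟨A, B, f, g, hfg⟩ := hnt
  have step := h.exists_step hfg
  choose E hE1 hE2 using step
  constructor
  · refine ⟨fun n => Nat.rec A (fun _ D => E D) n, fun i => ?_⟩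
    exact ⟨hE1 _, hE2 _⟩
  · rintro ⟨D, hD⟩
    exact hE2 D (hD (E D))
end

section
/- Let B and C be locally small categories such that all morphisms of B are mono, and suppose there is a pre-adjunction (F, H, Φ) from B to C. Then for all objects A, B of B, the cardinality of hom_C(F(A), F(B)) is at least the cardinality of hom_B(A, B). -/
open CategoryTheory

/-- If all morphisms of `B` are mono and there is a pre-adjunction `(F, H, Φ)` from `B`
to `C`, then `|hom_C(F A, F X)| ≥ |hom_B(A, X)|`: there is an injection
`hom_B(A, X) ↪ hom_C(F A, F X)`. -/
theorem preAdjunction_card_le {B C : Type*} [Category B] [Category C]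
    (hmono : ∀ {X Y : B} (f : X ⟶ Y), Mono f) (P : PreAdjunction B C) (A X : B) :
    ∃ θ : (A ⟶ X) → (P.F A ⟶ P.F X), Function.Injective θ := by
  classical
  choose v hv using fun f : A ⟶ X => P.pa A X (P.F X) (𝟙 (P.F X)) f
  refine ⟨v, fun f g hfg => ?_⟩
  have h1 := hv f
  have h2 := hv g
  rw [hfg] at h1
  have : f ≫ P.Φ X (P.F X) (𝟙 (P.F X)) = g ≫ P.Φ X (P.F X) (𝟙 (P.F X)) := by
    rw [h1, h2]
  have := hmono (P.Φ X (P.F X) (𝟙 (P.F X)))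
  exact (cancel_mono _).mp ‹f ≫ _ = g ≫ _›
end

section
/- The categories Ram (finite chains with monotone injections) and InfRam (finite chains together with chains of order type ω, with embeddings) are Tukey unrelated: there is no pre-adjunction from Ram to InfRam and no pre-adjunction from InfRam to Ram. -/
open CategoryTheory

/-- Objects of the category `Ram`: finite chains. -/
structure RamOb where
  n : ℕ

/-- `Ram`: finite chains with strictly monotone (injective monotone) maps. -/
instance : Category RamOb where
  Hom a b := {f : Fin a.n → Fin b.n // StrictMono f}
  id a := ⟨id, strictMono_id⟩
  comp f g := ⟨g.1 ∘ f.1, g.2.comp f.2⟩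
  id_comp f := Subtype.ext rfl
  comp_id f := Subtype.ext rfl
  assoc f g h := Subtype.ext rfl

/-- Objects of `InfRam`: all finite chains (`some n`, the chain `{0,…,n−1}`) together
with a chain of order type `ω` (`none`, the chain `ℕ`). -/
abbrev InfRamOb := Option ℕ

/-- The chain carried by an object of `InfRam`. -/
def carr : InfRamOb → Type := fun o => o.elim ℕ Fin

instance carrLinearOrder : (o : InfRamOb) → LinearOrder (carr o)
  | none => inferInstanceAs (LinearOrder ℕ)
  | some n => inferInstanceAs (LinearOrder (Fin n))

/-- `InfRam`: finite chains and chains of order type `ω`, with order embeddings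
(strictly monotone maps). -/
instance : Category InfRamOb where
  Hom a b := {f : carr a → carr b // StrictMono f}
  id a := ⟨id, strictMono_id⟩
  comp f g := ⟨g.1 ∘ f.1, g.2.comp f.2⟩
  id_comp f := Subtype.ext rfl
  comp_id f := Subtype.ext rfl
  assoc f g h := Subtype.ext rfl

/-!
`InfRam` has a weakly terminal object, the chain `ω`, while `Ram` has none; a pre-adjunction
from `Ram` to `InfRam` would make `H ω` weakly terminal in `Ram`. Conversely, since every
morphism of `InfRam` is mono, a pre-adjunction from `InfRam` to `Ram` would inject the infinite
hom-set `hom(1, ω)` into a hom-set of `Ram`, and those are finite.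
-/

namespace PreAdjunction

variable {B C : Type*} [Category B] [Category C] (P : PreAdjunction B C)

theorem nonempty_hom_H_of_weaklyTerminal {T : C} (hT : ∀ Y : C, Nonempty (Y ⟶ T)) (X : B) :
    Nonempty (X ⟶ P.H T) :=
  (hT (P.F X)).map (P.Φ X T)

/-- With `g = Φ (𝟙 (F X))`, the pre-adjunction property writes each `f ≫ g` as some `Φ v`;
cancelling the mono `g` makes `f ↦ v` injective. -/
theorem nonempty_embedding_hom (hmono : ∀ {X Y : B} (f : X ⟶ Y), Mono f) (A X : B) :
    Nonempty ((A ⟶ X) ↪ (P.F A ⟶ P.F X)) := by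
  choose v hv using fun f : A ⟶ X => P.pa A X (P.F X) (𝟙 _) f
  simp only [Category.comp_id] at hv
  refine ⟨⟨v, fun f₁ f₂ h => ?_⟩⟩
  have := hmono (P.Φ X (P.F X) (𝟙 _))
  rw [← cancel_mono (P.Φ X (P.F X) (𝟙 _)), hv, hv, h]

theorem infinite_hom_of_mono (hmono : ∀ {X Y : B} (f : X ⟶ Y), Mono f) {A X : B}
    [Infinite (A ⟶ X)] : Infinite (P.F A ⟶ P.F X) :=
  let ⟨e⟩ := P.nonempty_embedding_hom hmono A X
  Infinite.of_injective e e.injective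

end PreAdjunction

namespace RamOb

instance finite_hom (a b : RamOb) : Finite (a ⟶ b) :=
  inferInstanceAs (Finite {f : Fin a.n → Fin b.n // StrictMono f})

theorem n_le_of_hom {a b : RamOb} (f : a ⟶ b) : a.n ≤ b.n :=
  Fin.le_of_injective f.1 f.2.injective

theorem not_weaklyTerminal (T : RamOb) : ¬ ∀ X : RamOb, Nonempty (X ⟶ T) := fun h =>
  (h ⟨T.n + 1⟩).elim fun f => (n_le_of_hom f).not_gt (Nat.lt_succ_self T.n)

end RamOb

namespace InfRamOb

theorem nonempty_hom_omega : ∀ o : InfRamOb, Nonempty (o ⟶ (none : InfRamOb))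
  | none => ⟨𝟙 _⟩
  | some _ => ⟨⟨Fin.val, fun _ _ h => h⟩⟩

theorem mono {X Y : InfRamOb} (g : X ⟶ Y) : Mono g :=
  ⟨fun _ _ h => Subtype.ext <| funext fun x => g.2.injective (congrFun (congrArg Subtype.val h) x)⟩

instance infinite_hom_one_omega : Infinite ((some 1 : InfRamOb) ⟶ none) :=
  Infinite.of_injective
    (fun n : ℕ => (⟨fun _ => n, Subsingleton.strictMono _⟩ : {f : Fin 1 → ℕ // StrictMono f}))
    fun _ _ h => congrFun (congrArg Subtype.val h) (0 : Fin 1)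

end InfRamOb

/-- `Ram` and `InfRam` are Tukey unrelated: there is no pre-adjunction in either
direction. -/
theorem ram_infRam_tukey_unrelated :
    ¬ Nonempty (PreAdjunction RamOb InfRamOb) ∧
    ¬ Nonempty (PreAdjunction InfRamOb RamOb) := by
  constructor
  · rintro ⟨P⟩
    exact RamOb.not_weaklyTerminal _
      (P.nonempty_hom_H_of_weaklyTerminal InfRamOb.nonempty_hom_omega)
  · rintro ⟨P⟩
    have := P.infinite_hom_of_mono InfRamOb.mono (A := some 1) (X := none)
    exact not_finite (P.F (some 1) ⟶ P.F none)
end
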